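/- Let G be a weighted graph with Laplacian B, and let B̂ = B + B_e where B_e is the Laplacian of a single edge e=(u,v) with weight w > 0 (i.e., B_e has entries w at (u,u),(v,v) and -w at (u,v),(v,u), zeros elsewhere). For a positive diagonal matrix M, the ordered eigenvalues μ_i of M B and μ̂_i of M B̂ satisfy μ_i ≤ μ̂_i ≤ μ_i + (m_u + m_v) w for all i. -/

import Mathlib

open Module RCLike Polynomial Matrix

/-! Symmetrizing with `D = diagonal √m`, the matrix `M B` is similar to `D B D`, and `M B̂` to
`D B D + w (D d) (D d)ᵀ` with `d = eᵤ - eᵥ`; both are real symmetric. Their quadratic forms satisfy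
`xᵀ D B D x ≤ xᵀ D B̂ D x ≤ xᵀ D B D x + (mᵤ + mᵥ) w ‖x‖²`, the second inequality by
Cauchy–Schwarz, and the eigenvalue bounds follow from Weyl's monotonicity principle: if
`⟪x, T x⟫ ≤ ⟪x, T' x⟫ + c ‖x‖²` for all `x`, then `λᵢ(T) ≤ λᵢ(T') + c` for the eigenvalues in
decreasing order. For the principle, a dimension count gives some `x ≠ 0` in the span of the
eigenvectors of `T` for `λ₀, …, λᵢ` and in that of the eigenvectors of `T'` for `λ'ᵢ, …, λ'ₙ₋₁`. -/

theorem Module.Basis.exists_ne_zero_repr_eq_zero {K E : Type*} [Field K] [AddCommGroup E]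
    [Module K E] {n : ℕ} (b b' : Basis (Fin n) K E) (i : Fin n) :
    ∃ x ≠ 0, (∀ j, i < j → b.repr x j = 0) ∧ ∀ j, j < i → b'.repr x j = 0 := by
  let f : E →ₗ[K] ({j : Fin n // j ≠ i} → K) :=
    LinearMap.pi fun j => if i < j.1 then b.coord j.1 else b'.coord j.1
  have : FiniteDimensional K E := b.finiteDimensional_of_finite
  have hdim : finrank K ({j : Fin n // j ≠ i} → K) < finrank K E := by
    simp [Module.finrank_eq_card_basis b, Fintype.card_subtype_compl, i.pos]
  obtain ⟨x, hx, hx0⟩ :=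
    Submodule.exists_mem_ne_zero_of_ne_bot (LinearMap.ker_ne_bot_of_finrank_lt (f := f) hdim)
  have hfx (j : Fin n) (hj : j ≠ i) : (if i < j then b.repr x j else b'.repr x j) = 0 := by
    have := congrFun (LinearMap.mem_ker.mp hx) ⟨j, hj⟩
    by_cases h : i < j <;> simp_all [f]
  refine ⟨x, hx0, fun j hj => ?_, fun j hj => ?_⟩
  · simpa [hj] using hfx j hj.ne'
  · simpa [hj.not_gt] using hfx j hj.ne

namespace LinearMap.IsSymmetric

variable {𝕜 E : Type*} [RCLike 𝕜] [NormedAddCommGroup E] [InnerProductSpace 𝕜 E]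
  [FiniteDimensional 𝕜 E] {T : E →ₗ[𝕜] E} {n : ℕ}

theorem re_inner_apply_eq_sum (hT : T.IsSymmetric) (hn : finrank 𝕜 E = n) (x : E) :
    re (inner 𝕜 x (T x)) =
      ∑ j, hT.eigenvalues hn j * ‖(hT.eigenvectorBasis hn).repr x j‖ ^ 2 := by
  rw [← (hT.eigenvectorBasis hn).repr.inner_map_map, PiLp.inner_apply, map_sum]
  refine Finset.sum_congr rfl fun j _ => ?_
  rw [eigenvectorBasis_apply_self_apply, ← smul_eq_mul, inner_smul_right,
    inner_self_eq_norm_sq_to_K]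
  norm_cast

theorem norm_sq_eq_sum (hT : T.IsSymmetric) (hn : finrank 𝕜 E = n) (x : E) :
    ‖x‖ ^ 2 = ∑ j, ‖(hT.eigenvectorBasis hn).repr x j‖ ^ 2 := by
  rw [← (hT.eigenvectorBasis hn).repr.norm_map, EuclideanSpace.norm_sq_eq]

theorem eigenvalues_mul_norm_sq_le (hT : T.IsSymmetric) (hn : finrank 𝕜 E = n) {x : E}
    {i : Fin n} (hx : ∀ j, i < j → (hT.eigenvectorBasis hn).repr x j = 0) :
    hT.eigenvalues hn i * ‖x‖ ^ 2 ≤ re (inner 𝕜 x (T x)) := by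
  rw [hT.re_inner_apply_eq_sum hn, hT.norm_sq_eq_sum hn, Finset.mul_sum]
  refine Finset.sum_le_sum fun j _ => ?_
  rcases le_or_gt j i with hji | hij
  · exact mul_le_mul_of_nonneg_right (hT.eigenvalues_antitone hn hji) (by positivity)
  · simp [hx j hij]

theorem re_inner_le_eigenvalues_mul_norm_sq (hT : T.IsSymmetric) (hn : finrank 𝕜 E = n) {x : E}
    {i : Fin n} (hx : ∀ j, j < i → (hT.eigenvectorBasis hn).repr x j = 0) :
    re (inner 𝕜 x (T x)) ≤ hT.eigenvalues hn i * ‖x‖ ^ 2 := by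
  rw [hT.re_inner_apply_eq_sum hn, hT.norm_sq_eq_sum hn, Finset.mul_sum]
  refine Finset.sum_le_sum fun j _ => ?_
  rcases le_or_gt i j with hij | hji
  · exact mul_le_mul_of_nonneg_right (hT.eigenvalues_antitone hn hij) (by positivity)
  · simp [hx j hji]

theorem eigenvalues_le_add_of_re_inner_le {T' : E →ₗ[𝕜] E} (hT : T.IsSymmetric)
    (hT' : T'.IsSymmetric) (hn : finrank 𝕜 E = n) {c : ℝ}
    (h : ∀ x, re (inner 𝕜 x (T x)) ≤ re (inner 𝕜 x (T' x)) + c * ‖x‖ ^ 2) (i : Fin n) :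
    hT.eigenvalues hn i ≤ hT'.eigenvalues hn i + c := by
  obtain ⟨x, hx0, hxT, hxT'⟩ := Basis.exists_ne_zero_repr_eq_zero
    (hT.eigenvectorBasis hn).toBasis (hT'.eigenvectorBasis hn).toBasis i
  simp only [OrthonormalBasis.coe_toBasis_repr_apply] at hxT hxT'
  refine le_of_mul_le_mul_right ?_ (by positivity : 0 < ‖x‖ ^ 2)
  calc hT.eigenvalues hn i * ‖x‖ ^ 2 ≤ re (inner 𝕜 x (T x)) :=
        hT.eigenvalues_mul_norm_sq_le hn hxT
    _ ≤ re (inner 𝕜 x (T' x)) + c * ‖x‖ ^ 2 := h x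
    _ ≤ (hT'.eigenvalues hn i + c) * ‖x‖ ^ 2 := by
      rw [add_mul]
      exact add_le_add_left (hT'.re_inner_le_eigenvalues_mul_norm_sq hn hxT') _

end LinearMap.IsSymmetric

theorem Polynomial.roots_prod_univ_X_sub_C {R ι : Type*} [CommRing R] [IsDomain R] [Fintype ι]
    (f : ι → R) : (∏ i, (X - C (f i))).roots = Multiset.map f Finset.univ.val := by
  rw [roots_prod]
  · simp
  · simp [Finset.prod_ne_zero_iff, X_sub_C_ne_zero]

theorem Polynomial.eq_of_monotone_of_prod_X_sub_C_eq {R : Type*} [CommRing R] [IsDomain R]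
    [LinearOrder R] {n : ℕ} {f g : Fin n → R} (hf : Monotone f) (hg : Monotone g)
    (h : ∏ i, (X - C (f i)) = ∏ i, (X - C (g i))) : f = g := by
  have hroots := congrArg roots h
  rw [roots_prod_univ_X_sub_C, roots_prod_univ_X_sub_C, Fin.univ_val_map, Fin.univ_val_map,
    Multiset.coe_eq_coe] at hroots
  exact List.ofFn_injective <|
    hroots.eq_of_sortedLE (List.sortedLE_ofFn_iff.mpr hf) (List.sortedLE_ofFn_iff.mpr hg)

theorem Matrix.charpoly_toEuclideanLin {𝕜 ι : Type*} [RCLike 𝕜] [Fintype ι] [DecidableEq ι]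
    (A : Matrix ι ι 𝕜) : (toEuclideanLin A).charpoly = A.charpoly := by
  rw [toEuclideanLin_eq_toLin_orthonormal, charpoly_toLin]

namespace Matrix.IsHermitian

variable {n : ℕ} {A A' : Matrix (Fin n) (Fin n) ℝ}

theorem eq_eigenvalues_comp_rev (hA : A.IsHermitian) {f : Fin n → ℝ} (hf : Monotone f)
    (h : A.charpoly = ∏ i, (X - C (f i))) :
    f = (isSymmetric_toEuclideanLin_iff.mpr hA).eigenvalues finrank_euclideanSpace_fin ∘
      Fin.rev := by
  set hT := isSymmetric_toEuclideanLin_iff.mpr hA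
  refine eq_of_monotone_of_prod_X_sub_C_eq hf
    ((hT.eigenvalues_antitone _).comp Fin.rev_anti) ?_
  rw [← h, ← charpoly_toEuclideanLin, hT.charpoly_eq finrank_euclideanSpace_fin]
  exact (Fintype.prod_equiv Fin.revPerm _ _ fun i => by simp).symm

theorem le_add_of_dotProduct_mulVec_le (hA : A.IsHermitian) (hA' : A'.IsHermitian)
    {f g : Fin n → ℝ} (hf : Monotone f) (hg : Monotone g)
    (hfA : A.charpoly = ∏ i, (X - C (f i))) (hgA' : A'.charpoly = ∏ i, (X - C (g i))) {c : ℝ}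
    (h : ∀ x, x ⬝ᵥ (A *ᵥ x) ≤ x ⬝ᵥ (A' *ᵥ x) + c * (x ⬝ᵥ x)) (i : Fin n) :
    f i ≤ g i + c := by
  rw [hA.eq_eigenvalues_comp_rev hf hfA, hA'.eq_eigenvalues_comp_rev hg hgA']
  refine LinearMap.IsSymmetric.eigenvalues_le_add_of_re_inner_le _ _ _ (fun x => ?_) _
  simpa only [RCLike.re_to_real, EuclideanSpace.inner_eq_star_dotProduct, star_trivial,
    ← real_inner_self_eq_norm_sq, ofLp_toLpLin, toLin'_apply, dotProduct_comm _ x.ofLp]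
    using h x.ofLp

end Matrix.IsHermitian

section EdgeLaplacian

variable {ι R : Type*} [DecidableEq ι]

def edgeLaplacian [Ring R] (u v : ι) (w : R) : Matrix ι ι R :=
  w • vecMulVec (Pi.single u 1 - Pi.single v 1) (Pi.single u 1 - Pi.single v 1)

theorem edgeLaplacian_apply [Ring R] {u v : ι} (huv : u ≠ v) (w : R) (i j : ι) :
    edgeLaplacian u v w i j =
      if i = u ∧ j = u then w else
      if i = v ∧ j = v then w else
      if (i = u ∧ j = v) ∨ (i = v ∧ j = u) then -w else 0 := by
  simp only [edgeLaplacian, Matrix.smul_apply, vecMulVec_apply, Pi.sub_apply, Pi.single_apply]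
  split_ifs <;> simp_all [huv.symm]

theorem dotProduct_edgeLaplacian_mulVec [Fintype ι] [CommRing R] (u v : ι) (w : R) (x : ι → R) :
    x ⬝ᵥ (edgeLaplacian u v w *ᵥ x) = w * (x u - x v) ^ 2 := by
  simp [edgeLaplacian, smul_mulVec, vecMulVec_mulVec, dotProduct_sub]
  ring

theorem posSemidef_edgeLaplacian [Fintype ι] (u v : ι) {w : ℝ} (hw : 0 ≤ w) :
    (edgeLaplacian u v w).PosSemidef := by
  simpa [edgeLaplacian] using
    (posSemidef_vecMulVec_self_star (Pi.single u 1 - Pi.single v 1 : ι → ℝ)).smul hw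

end EdgeLaplacian

theorem sq_mul_sub_mul_le_mul_dotProduct_self {ι : Type*} [Fintype ι] {u v : ι} (huv : u ≠ v)
    (a x : ι → ℝ) : (a u * x u - a v * x v) ^ 2 ≤ (a u ^ 2 + a v ^ 2) * (x ⬝ᵥ x) := by
  classical
  have hpair : x u ^ 2 + x v ^ 2 ≤ x ⬝ᵥ x := by
    simpa [dotProduct, Finset.sum_pair huv, sq] using
      Finset.sum_le_sum_of_subset_of_nonneg (Finset.subset_univ {u, v})
        (fun k _ _ => mul_self_nonneg (x k))
  calc (a u * x u - a v * x v) ^ 2 ≤ (a u ^ 2 + a v ^ 2) * (x u ^ 2 + x v ^ 2) := by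
        nlinarith [sq_nonneg (a u * x v + a v * x u)]
    _ ≤ (a u ^ 2 + a v ^ 2) * (x ⬝ᵥ x) := by gcongr

theorem dotProduct_diagonal_mul_mul_diagonal_mulVec {ι R : Type*} [Fintype ι] [DecidableEq ι]
    [CommRing R] (s : ι → R) (M : Matrix ι ι R) (x : ι → R) :
    x ⬝ᵥ ((diagonal s * M * diagonal s) *ᵥ x) = (s * x) ⬝ᵥ (M *ᵥ (s * x)) := by
  rw [← mulVec_mulVec, ← mulVec_mulVec, dotProduct_mulVec]
  congr 2 <;> ext i <;> simp [mulVec_diagonal, vecMul_diagonal, mul_comm]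

theorem charpoly_diagonal_mul_eq_sqrt_conj {ι : Type*} [Fintype ι] [DecidableEq ι] {m : ι → ℝ}
    (hm : ∀ i, 0 ≤ m i) (M : Matrix ι ι ℝ) :
    (diagonal m * M).charpoly =
      (diagonal (fun i => √(m i)) * M * diagonal (fun i => √(m i))).charpoly := by
  have hsq : diagonal m = diagonal (fun i => √(m i)) * diagonal (fun i => √(m i)) := by
    rw [diagonal_mul_diagonal]
    exact congrArg diagonal (funext fun i => (Real.mul_self_sqrt (hm i)).symm)
  rw [hsq, mul_assoc, charpoly_mul_comm]

theorem stmt_7 (n : ℕ) (B : Matrix (Fin n) (Fin n) ℝ) (hB : B.PosSemidef)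
    (u v : Fin n) (huv : u ≠ v) (w : ℝ) (hw : 0 < w)
    (Be : Matrix (Fin n) (Fin n) ℝ)
    (hBe : Be = Matrix.of (fun i j =>
      if i = u ∧ j = u then w else
      if i = v ∧ j = v then w else
      if (i = u ∧ j = v) ∨ (i = v ∧ j = u) then -w else 0))
    (m : Fin n → ℝ) (hm : ∀ i, 0 < m i)
    (mu muhat : Fin n → ℝ) (hmu : Monotone mu) (hmuhat : Monotone muhat)
    (hchar : (Matrix.diagonal m * B).charpoly = ∏ i, (X - C (mu i)))
    (hcharhat : (Matrix.diagonal m * (B + Be)).charpoly = ∏ i, (X - C (muhat i))) :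
    ∀ i, mu i ≤ muhat i ∧ muhat i ≤ mu i + (m u + m v) * w := by
  set s : Fin n → ℝ := fun i => √(m i)
  have hsq (i : Fin n) : s i ^ 2 = m i := Real.sq_sqrt (hm i).le
  have hBe' : Be = edgeLaplacian u v w :=
    hBe.trans (ext fun i j => (edgeLaplacian_apply huv w i j).symm)
  have hDB {M : Matrix (Fin n) (Fin n) ℝ} (hM : M.IsHermitian) :
      (diagonal s * M * diagonal s).IsHermitian := by
    simpa using isHermitian_conjTranspose_mul_mul (diagonal s) hM
  have hA := hDB hB.isHermitian
  have hA' := hDB (hB.add (hBe' ▸ posSemidef_edgeLaplacian u v hw.le)).isHermitian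
  rw [charpoly_diagonal_mul_eq_sqrt_conj (fun i => (hm i).le)] at hchar hcharhat
  have hquad (x : Fin n → ℝ) : x ⬝ᵥ ((diagonal s * (B + Be) * diagonal s) *ᵥ x) =
      x ⬝ᵥ ((diagonal s * B * diagonal s) *ᵥ x) + w * (s u * x u - s v * x v) ^ 2 := by
    simp only [dotProduct_diagonal_mul_mul_diagonal_mulVec, add_mulVec, dotProduct_add, hBe',
      dotProduct_edgeLaplacian_mulVec, Pi.mul_apply]
  refine fun i => ⟨?_, ?_⟩
  · refine (hA.le_add_of_dotProduct_mulVec_le hA' hmu hmuhat hchar hcharhat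
      (fun x => ?_) i).trans_eq (add_zero _)
    rw [hquad]
    linarith [mul_nonneg hw.le (sq_nonneg (s u * x u - s v * x v))]
  · refine hA'.le_add_of_dotProduct_mulVec_le hA hmuhat hmu hcharhat hchar (fun x => ?_) i
    rw [hquad, ← hsq u, ← hsq v]
    linarith [mul_le_mul_of_nonneg_left (sq_mul_sub_mul_le_mul_dotProduct_self huv s x) hw.le]
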